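/- arXiv:0710.4409 — 3 statements merged into one kernel-verified Lean document; each statement's English description precedes it below -/
import Mathlib

section
/- Let r ≥ 2 and b be coprime positive integers with 0 < b < r, and let n be an integer with 2 ≤ n ≤ ⌊(r+1)/2⌋. Then Σ_{j=1}^{n−1} \overline{bj}(r−\overline{bj})/(2r) ≥ Σ_{j=1}^{n−1} j(r−j)/(2r), where \overline{x} denotes the smallest nonnegative residue of x modulo r. -/
/-!
Replacing the residue `x = bj mod r` by its distance `min x (r - x)` to the nearest multiple of
`r` does not change `x (r - x)`. For `1 ≤ j < n ≤ (r + 1) / 2` these distances are pairwise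
distinct (`bj ≡ ±bk` forces `j ≡ ±k`, as `b` is a unit mod `r`) and lie in `[1, r/2]`, where
`t ↦ t (r - t)` is increasing. So the `i`-th smallest distance is at least `i`, and the sum
dominates `∑ j (r - j)`.
-/

open Finset

theorem Finset.sum_Icc_one_card_le_sum {β : Type*} [AddCommMonoid β] [PartialOrder β]
    [IsOrderedAddMonoid β] {f : ℕ → β} {N : ℕ} (hf : MonotoneOn f (Set.Icc 1 N))
    {S : Finset ℕ} (hS : S ⊆ Icc 1 N) :
    ∑ i ∈ Icc 1 #S, f i ≤ ∑ s ∈ S, f s := by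
  induction S using Finset.induction_on_max with
  | empty => simp
  | insert a s has ih =>
    have ha : a ∉ s := fun h => (has a h).false
    have haN : a ∈ Icc 1 N := hS (mem_insert_self a s)
    have hcard : #s + 1 ≤ a := by
      have hsub : insert a s ⊆ Icc 1 a := insert_subset (by simpa using (mem_Icc.1 haN).1)
        fun x hx => mem_Icc.2 ⟨(mem_Icc.1 (hS (mem_insert_of_mem hx))).1, (has x hx).le⟩
      simpa [card_insert_of_notMem ha] using card_le_card hsub
    rw [card_insert_of_notMem ha, sum_Icc_succ_top (by omega), sum_insert ha, add_comm (f a)]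
    rw [mem_Icc] at haN
    exact add_le_add (ih ((subset_insert a s).trans hS))
      (hf ⟨by omega, by omega⟩ haN hcard)

theorem monotoneOn_mul_sub {𝕜 : Type*} [Field 𝕜] [LinearOrder 𝕜] [IsStrictOrderedRing 𝕜]
    (c : 𝕜) : MonotoneOn (fun x => x * (c - x)) (Set.Iic (c / 2)) := by
  intro x _ y hy hxy
  simp only [Set.mem_Iic] at hy
  nlinarith

namespace ZMod

theorem natAbs_valMinAbs_mul_sub {R : Type*} [CommRing R] {n : ℕ} [NeZero n] (x : ZMod n) :
    (x.valMinAbs.natAbs : R) * (n - x.valMinAbs.natAbs) = x.val * (n - x.val) := by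
  rw [valMinAbs_natAbs_eq_min]
  rcases min_cases x.val (n - x.val) with ⟨h, _⟩ | ⟨h, _⟩ <;> rw [h]
  push_cast [Nat.cast_sub x.val_le]
  ring

theorem natAbs_valMinAbs_mul_eq_iff {n : ℕ} {u : ZMod n} (hu : IsUnit u) {a c : ZMod n} :
    (u * a).valMinAbs.natAbs = (u * c).valMinAbs.natAbs ↔
      a.valMinAbs.natAbs = c.valMinAbs.natAbs := by
  simp only [natAbs_valMinAbs_eq_natAbs_valMinAbs, ← mul_neg, hu.mul_right_inj]

theorem injOn_natAbs_valMinAbs_mul {n : ℕ} {u : ZMod n} (hu : IsUnit u) :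
    Set.InjOn (fun j : ℕ => (u * j).valMinAbs.natAbs) (Set.Iic (n / 2)) := by
  intro j hj k hk hjk
  simpa [valMinAbs_natCast_of_le_half hj, valMinAbs_natCast_of_le_half hk] using
    (natAbs_valMinAbs_mul_eq_iff hu).1 hjk

end ZMod

theorem sum_Icc_mul_sub_le_sum_mod_mul_sub {r b m : ℕ} (hcop : b.Coprime r) (hm : 2 * m < r) :
    ∑ j ∈ Icc 1 m, (j : ℚ) * (r - j) ≤
      ∑ j ∈ Icc 1 m, ((b * j % r : ℕ) : ℚ) * (r - (b * j % r : ℕ)) := by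
  have : NeZero r := ⟨by omega⟩
  have hu : IsUnit (b : ZMod r) := (ZMod.isUnit_iff_coprime b r).2 hcop
  set d : ℕ → ℕ := fun j => ((b : ZMod r) * j).valMinAbs.natAbs
  have hd_inj : Set.InjOn d (Set.Iic (r / 2)) := ZMod.injOn_natAbs_valMinAbs_mul hu
  have hm_half : ∀ j ∈ Icc 1 m, j ≤ r / 2 := fun j hj => by rw [mem_Icc] at hj; omega
  have hd_mem : ∀ j ∈ Icc 1 m, d j ∈ Icc 1 (r / 2) := by
    intro j hj
    refine mem_Icc.2 ⟨Nat.pos_of_ne_zero fun hdj => ?_, ZMod.natAbs_valMinAbs_le _⟩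
    have : j = 0 := hd_inj (hm_half j hj) (Nat.zero_le _) (by simpa [d] using hdj)
    simp [this] at hj
  have hd_injOn : Set.InjOn d (Icc 1 m) := hd_inj.mono hm_half
  have hq : MonotoneOn (fun s : ℕ => (s : ℚ) * (r - s)) (Set.Icc 1 (r / 2)) :=
    ((monotoneOn_mul_sub (r : ℚ)).comp (Nat.mono_cast.monotoneOn _) fun s hs => by
      simpa using (Nat.cast_le.2 hs).trans (Nat.cast_div_le (α := ℚ))).mono
      Set.Icc_subset_Iic_self
  calc ∑ j ∈ Icc 1 m, (j : ℚ) * (r - j)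
      = ∑ i ∈ Icc 1 #((Icc 1 m).image d), (i : ℚ) * (r - i) := by
        rw [card_image_of_injOn hd_injOn, Nat.card_Icc, Nat.add_sub_cancel]
    _ ≤ ∑ s ∈ (Icc 1 m).image d, (s : ℚ) * (r - s) :=
        sum_Icc_one_card_le_sum hq (image_subset_iff.2 hd_mem)
    _ = ∑ j ∈ Icc 1 m, (d j : ℚ) * (r - d j) := sum_image hd_injOn
    _ = _ := sum_congr rfl fun j _ => by
        rw [ZMod.natAbs_valMinAbs_mul_sub, ← Nat.cast_mul, ZMod.val_natCast]

theorem stmt_2_general (r b n : ℕ) (hcop : Nat.Coprime b r) (hn2 : n ≤ (r + 1) / 2) :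
    ∑ j ∈ Finset.Icc 1 (n - 1),
        ((b * j % r : ℕ) : ℚ) * ((r : ℚ) - (b * j % r : ℕ)) / (2 * r) ≥
      ∑ j ∈ Finset.Icc 1 (n - 1), (j : ℚ) * ((r : ℚ) - j) / (2 * r) := by
  rcases Nat.eq_zero_or_pos (n - 1) with hm | hm
  · simp [hm]
  rw [ge_iff_le, ← sum_div, ← sum_div]
  refine div_le_div_of_nonneg_right ?_ (by positivity)
  exact sum_Icc_mul_sub_le_sum_mod_mul_sub hcop (by omega)

/-- Among singularities of index r, the type (1/r)(1,-1,1) minimizes Reid's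
correction term l(Q,n) for n ≤ ⌊(r+1)/2⌋. -/
theorem stmt_2 (r b n : ℕ) (hr : 2 ≤ r) (hb0 : 0 < b) (hbr : b < r)
    (hcop : Nat.Coprime b r) (hn : 2 ≤ n) (hn2 : n ≤ (r + 1) / 2) :
    ∑ j ∈ Finset.Icc 1 (n - 1),
        ((b * j % r : ℕ) : ℚ) * ((r : ℚ) - (b * j % r : ℕ)) / (2 * r) ≥
      ∑ j ∈ Finset.Icc 1 (n - 1), (j : ℚ) * ((r : ℚ) - j) / (2 * r) :=
  stmt_2_general r b n hcop hn2
end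

section
/- Let α and β be integers with 1 ≤ β ≤ α, let b be a positive integer coprime to α with 0 < b < α, and let n be an integer with 2 ≤ n ≤ min(β, ⌊(α+1)/2⌋). Then Σ_{j=1}^{n−1} \overline{bj}(α−\overline{bj})/(2α) ≥ Σ_{j=1}^{n−1} j(β−j)/(2β), where \overline{x} is the residue of x mod α. -/
/-!
Write `f_r(x) = x(r - x)/(2r)` (`reidTerm r x`). Since `f_α(α - x) = f_α(x)`, the residue
`bj mod α` may be replaced by its distance `d(j) ≤ α/2` to the nearest multiple of `α`
(`absResidue α (b * j)`). For `1 ≤ j < n` these distances are distinct and positive: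
`d(j) = d(k)` forces `α ∣ b(j ∓ k)`, while `0 < j + k < α`. As `f_α` increases on `[0, α/2]`,
a sum of `f_α` over `n - 1` distinct points of `[1, α/2]` is at least `∑_{i<n} f_α(i)`, and
`f_α(i) ≥ f_β(i)` because `f_r(x) = x/2 - x²/(2r)` increases in `r`.
-/

open Finset

def absResidue (r x : ℕ) : ℕ := min (x % r) (r - x % r)

theorem two_mul_absResidue_le (r x : ℕ) : 2 * absResidue r x ≤ r := by
  unfold absResidue; omega

theorem one_le_absResidue {r x : ℕ} (hr : 0 < r) (hx : ¬ r ∣ x) : 1 ≤ absResidue r x := by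
  have hx0 : x % r ≠ 0 := fun h => hx (Nat.dvd_of_mod_eq_zero h)
  have := Nat.mod_lt x hr
  unfold absResidue; omega

theorem modEq_or_dvd_add_of_absResidue_eq {r x y : ℕ} (hr : 0 < r)
    (h : absResidue r x = absResidue r y) : x ≡ y [MOD r] ∨ r ∣ x + y := by
  have hx := Nat.mod_lt x hr
  have hy := Nat.mod_lt y hr
  have : x % r = y % r ∨ x % r + y % r = r := by
    unfold absResidue at h; omega
  rcases this with hxy | hxy
  · exact .inl hxy
  · exact .inr (Nat.dvd_of_mod_eq_zero (by rw [Nat.add_mod, hxy, Nat.mod_self]))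

theorem eq_of_absResidue_mul_eq {r b j k : ℕ} (hb : b.Coprime r) (hj : 0 < j) (hk : 0 < k)
    (hjk : j + k < r) (h : absResidue r (b * j) = absResidue r (b * k)) : j = k := by
  rcases modEq_or_dvd_add_of_absResidue_eq (by omega) h with hmod | hdvd
  · exact (hmod.cancel_left_of_coprime hb.symm).eq_of_lt_of_lt (by omega) (by omega)
  · rw [← mul_add] at hdvd
    have := Nat.le_of_dvd (by omega) (hb.symm.dvd_of_dvd_mul_left hdvd)
    omega

section ReidTerm

variable {K : Type*} [Field K] [LinearOrder K] [IsStrictOrderedRing K]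

def reidTerm (r x : K) : K := x * (r - x) / (2 * r)

theorem reidTerm_sub_self (r x : K) : reidTerm r (r - x) = reidTerm r x := by
  unfold reidTerm; ring_nf

theorem reidTerm_le_reidTerm {r x y : K} (hr : 0 < r) (hxy : x ≤ y) (hxyr : x + y ≤ r) :
    reidTerm r x ≤ reidTerm r y := by
  have hdiff : reidTerm r y - reidTerm r x = (y - x) * (r - x - y) / (2 * r) := by
    unfold reidTerm; field_simp; ring
  have : 0 ≤ (y - x) * (r - x - y) / (2 * r) :=
    div_nonneg (mul_nonneg (by linarith) (by linarith)) (by positivity)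
  linarith

theorem reidTerm_le_reidTerm_of_le {r s x : K} (hs : 0 < s) (hsr : s ≤ r) :
    reidTerm s x ≤ reidTerm r x := by
  have expand : ∀ t : K, 0 < t → reidTerm t x = x / 2 - x ^ 2 / (2 * t) := by
    intro t ht
    unfold reidTerm; field_simp
  rw [expand s hs, expand r (hs.trans_le hsr)]
  gcongr

theorem reidTerm_absResidue {r : ℕ} (hr : 0 < r) (x : ℕ) :
    reidTerm (r : K) (absResidue r x) = reidTerm (r : K) (x % r : ℕ) := by
  have hlt := Nat.mod_lt x hr
  rcases min_cases (x % r) (r - x % r) with ⟨h, -⟩ | ⟨h, -⟩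
  · rw [absResidue, h]
  · rw [absResidue, h, Nat.cast_sub hlt.le, reidTerm_sub_self]

end ReidTerm

theorem sum_Icc_card_le_sum_of_monotoneOn {M : Type*} [AddCommMonoid M] [PartialOrder M]
    [IsOrderedAddMonoid M] {H : ℕ → M} {N : ℕ} (hH : MonotoneOn H (Set.Icc 1 N))
    {S : Finset ℕ} (hS : S ⊆ Icc 1 N) : ∑ i ∈ Icc 1 #S, H i ≤ ∑ s ∈ S, H s := by
  induction S using Finset.induction_on_max with
  | empty => simp
  | insert a S hlt ih =>
    have haS : a ∉ S := fun h => (hlt a h).false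
    have hSa : S ⊆ Icc 1 (a - 1) := fun x hx => by
      have := mem_Icc.mp (hS (mem_insert_of_mem hx))
      have := hlt x hx
      exact mem_Icc.mpr (by omega)
    have ha := mem_Icc.mp (hS (mem_insert_self a S))
    have hcard : #S + 1 ≤ a := by
      have := card_le_card hSa
      rw [Nat.card_Icc] at this
      omega
    rw [card_insert_of_notMem haS, sum_insert haS, sum_Icc_succ_top (by omega), add_comm]
    exact add_le_add (hH ⟨by omega, by omega⟩ ⟨ha.1, ha.2⟩ hcard)
      (ih ((subset_insert a S).trans hS))

theorem stmt_3_general (α β b n : ℕ) (hβ : 1 ≤ β) (hβα : β ≤ α)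
    (hcop : Nat.Coprime b α) (hn2 : n ≤ (α + 1) / 2) :
    ∑ j ∈ Finset.Icc 1 (n - 1),
        ((b * j % α : ℕ) : ℚ) * ((α : ℚ) - (b * j % α : ℕ)) / (2 * α) ≥
      ∑ j ∈ Finset.Icc 1 (n - 1), (j : ℚ) * ((β : ℚ) - j) / (2 * β) := by
  set d : ℕ → ℕ := fun j => absResidue α (b * j)
  have hα : 0 < α := by omega
  have hd : Set.InjOn d (Icc 1 (n - 1)) := fun j hj k hk h => by
    simp only [coe_Icc, Set.mem_Icc] at hj hk
    exact eq_of_absResidue_mul_eq hcop (by omega) (by omega) (by omega) h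
  have hdS : (Icc 1 (n - 1)).image d ⊆ Icc 1 (α / 2) := by
    simp only [subset_iff, mem_image, mem_Icc]
    rintro _ ⟨j, hj, rfl⟩
    have hdvd : ¬ α ∣ b * j := fun h =>
      absurd (Nat.le_of_dvd (by omega) (hcop.symm.dvd_of_dvd_mul_left h)) (by omega)
    show 1 ≤ absResidue α (b * j) ∧ absResidue α (b * j) ≤ α / 2
    exact ⟨one_le_absResidue hα hdvd, by have := two_mul_absResidue_le α (b * j); omega⟩
  have hmono : MonotoneOn (fun s : ℕ => reidTerm (α : ℚ) s) (Set.Icc 1 (α / 2)) :=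
    fun s hs t ht hst => reidTerm_le_reidTerm (by positivity) (by exact_mod_cast hst)
      (by norm_cast; simp only [Set.mem_Icc] at hs ht; omega)
  calc ∑ j ∈ Icc 1 (n - 1), ((b * j % α : ℕ) : ℚ) * ((α : ℚ) - (b * j % α : ℕ)) / (2 * α)
      = ∑ s ∈ (Icc 1 (n - 1)).image d, reidTerm (α : ℚ) s := by
        rw [sum_image hd]
        exact sum_congr rfl fun j _ => (reidTerm_absResidue hα _).symm
    _ ≥ ∑ i ∈ Icc 1 (n - 1), reidTerm (α : ℚ) i := by
        simpa [card_image_of_injOn hd] using sum_Icc_card_le_sum_of_monotoneOn hmono hdS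
    _ ≥ ∑ j ∈ Icc 1 (n - 1), (j : ℚ) * ((β : ℚ) - j) / (2 * β) :=
        sum_le_sum fun j _ => reidTerm_le_reidTerm_of_le (by positivity) (by exact_mod_cast hβα)

/-- l((1/α)(a,-a,1), n) ≥ l((1/β)(1,-1,1), n) for n ≤ min(β, ⌊(α+1)/2⌋). -/
theorem stmt_3 (α β b n : ℕ) (hβ : 1 ≤ β) (hβα : β ≤ α)
    (hb0 : 0 < b) (hbα : b < α) (hcop : Nat.Coprime b α)
    (hn : 2 ≤ n) (hn1 : n ≤ β) (hn2 : n ≤ (α + 1) / 2) :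
    ∑ j ∈ Finset.Icc 1 (n - 1),
        ((b * j % α : ℕ) : ℚ) * ((α : ℚ) - (b * j % α : ℕ)) / (2 * α) ≥
      ∑ j ∈ Finset.Icc 1 (n - 1), (j : ℚ) * ((β : ℚ) - j) / (2 * β) :=
  stmt_3_general α β b n hβ hβα hcop hn2
end

section
/- Let r ≥ 2 and b be coprime integers with 0 < b < r, and write f(j) = \overline{bj}(r−\overline{bj})/(2r) where \overline{x} is the residue of x mod r. Then for every integer m ≥ 2, f(m) + f(m+1) ≥ f(1). Consequently, setting l(n) = Σ_{j=1}^{n−1} f(j), one has l(m+2) ≥ l(m) + l(2) for all m ≥ 2. -/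
/-!
Writing `x` for the residue of `bm`, the residue of `b(m+1)` is `(x + b) mod r`, so
`2r(f(m) + f(m+1) - f(1))` equals `2x(r - x - b)` when `x + b < r` and `2(x + b - r)(r - x)`
otherwise; both are nonnegative. The second claim follows since `l(m+2) - l(m) = f(m) + f(m+1)`
and `l(2) = f(1)`.
-/

open Finset

theorem mul_sub_le_add_mul_sub_mod (r b x : ℕ) (hbr : b < r) (hxr : x < r) :
    (b : ℚ) * (r - b) ≤ (x : ℚ) * (r - x) + ((x + b) % r : ℕ) * (r - ((x + b) % r : ℕ)) := by
  rcases lt_or_ge (x + b) r with hlt | hge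
  · rw [Nat.mod_eq_of_lt hlt]
    have hgap : (0 : ℚ) ≤ r - x - b := by
      rw [sub_sub, sub_nonneg]; exact_mod_cast hlt.le
    push_cast
    nlinarith [mul_nonneg (Nat.cast_nonneg (α := ℚ) x) hgap]
  · have hwrap : (x + b) % r = x + b - r := by
      rw [Nat.mod_eq_sub_mod hge, Nat.mod_eq_of_lt (by omega)]
    have hwrapQ : (((x + b) % r : ℕ) : ℚ) = x + b - r := by
      rw [hwrap, Nat.cast_sub hge]; push_cast; ring
    have hover : (0 : ℚ) ≤ x + b - r := by
      rw [sub_nonneg]; exact_mod_cast hge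
    have hxr' : (0 : ℚ) ≤ r - x := by
      rw [sub_nonneg]; exact_mod_cast hxr.le
    rw [hwrapQ]
    nlinarith [mul_nonneg hover hxr']

theorem sum_Icc_one_add_two {M : Type*} [AddCommMonoid M] (f : ℕ → M) (n : ℕ) :
    ∑ j ∈ Icc 1 (n + 2), f j = ∑ j ∈ Icc 1 n, f j + f (n + 1) + f (n + 2) := by
  rw [sum_Icc_succ_top (by omega), sum_Icc_succ_top (by omega)]

theorem stmt_4_general (r b : ℕ) (hbr : b < r)
    (f : ℕ → ℚ)
    (hf : ∀ j, f j = ((b * j % r : ℕ) : ℚ) * ((r : ℚ) - (b * j % r : ℕ)) / (2 * r))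
    (l : ℕ → ℚ)
    (hl : ∀ n, l n = ∑ j ∈ Finset.Icc 1 (n - 1), f j) :
    (∀ m, 2 ≤ m → f m + f (m + 1) ≥ f 1) ∧
      (∀ m, 2 ≤ m → l (m + 2) ≥ l m + l 2) := by
  have two_step : ∀ m, f 1 ≤ f m + f (m + 1) := by
    intro m
    have hsucc : b * (m + 1) % r = (b * m % r + b) % r := by
      rw [Nat.mul_succ, Nat.add_mod, Nat.mod_eq_of_lt hbr]
    rw [hf, hf, hf, mul_one, Nat.mod_eq_of_lt hbr, hsucc, ← add_div]
    gcongr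
    exact mul_sub_le_add_mul_sub_mod r b _ hbr (Nat.mod_lt _ (by omega))
  have hl2 : l 2 = f 1 := by simp [hl]
  refine ⟨fun m _ => two_step m, fun m hm => ?_⟩
  obtain ⟨n, rfl⟩ := Nat.exists_eq_add_of_le' (by omega : 1 ≤ m)
  rw [hl, hl, hl2, show n + 1 + 2 - 1 = n + 2 by omega, sum_Icc_one_add_two, Nat.add_sub_cancel]
  linarith [two_step (n + 1)]

/-- Two-step superadditivity of Reid's correction term: f(m)+f(m+1) ≥ f(1)
and hence l(m+2) ≥ l(m) + l(2) for m ≥ 2. -/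
theorem stmt_4 (r b : ℕ) (hr : 2 ≤ r) (hb0 : 0 < b) (hbr : b < r)
    (hcop : Nat.Coprime b r)
    (f : ℕ → ℚ)
    (hf : ∀ j, f j = ((b * j % r : ℕ) : ℚ) * ((r : ℚ) - (b * j % r : ℕ)) / (2 * r))
    (l : ℕ → ℚ)
    (hl : ∀ n, l n = ∑ j ∈ Finset.Icc 1 (n - 1), f j) :
    (∀ m, 2 ≤ m → f m + f (m + 1) ≥ f 1) ∧
      (∀ m, 2 ≤ m → l (m + 2) ≥ l m + l 2) :=
  stmt_4_general r b hbr f hf l hl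
end
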